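/- Let (X, d) be a metric space with metric tight span (T^d_X, d_T), let (X, δ) be the diameter diversity δ = diam_d, and let (T^δ_X, δ_T) be the diversity tight span of (X, δ). Then the metric space obtained by restricting δ_T to pairs of elements of T^δ_X (i.e. the induced metric d_{δ_T}(f, g) = δ_T({f, g})) is isometric to (T^d_X, d_T). -/

import Mathlib

open scoped Classical

noncomputable section

/-- A diversity: axioms (D1) and (D2). -/
def IsDiversity {X : Type*} (δ : Finset X → ℝ) : Prop :=
  (∀ A, 0 ≤ δ A) ∧ (∀ A, δ A = 0 ↔ A.card ≤ 1) ∧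
    ∀ A B C : Finset X, B ≠ ∅ → δ (A ∪ C) ≤ δ (A ∪ B) + δ (B ∪ C)

/-- Membership in `P_X`: `f ∅ = 0` and `Σ_{A ∈ 𝓐} f A ≥ δ (⋃ 𝓐)` for every finite
collection `𝓐` of finite subsets of `X`. -/
def MemP {X : Type*} (δ : Finset X → ℝ) (f : Finset X → ℝ) : Prop :=
  f ∅ = 0 ∧ ∀ 𝓐 : Finset (Finset X), δ (𝓐.sup id) ≤ ∑ A ∈ 𝓐, f A

/-- Membership in the tight span `T_X`: the pointwise-minimal elements of `P_X`. -/
def MemT {X : Type*} (δ : Finset X → ℝ) (f : Finset X → ℝ) : Prop :=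
  MemP δ f ∧ ∀ g : Finset X → ℝ, MemP δ g → (∀ A, g A ≤ f A) → g = f

/-- The function `δ_T` on finite subsets of the tight span: `δ_T ∅ = 0` and for nonempty `F`,
`δ_T F = sup { δ(⋃𝓐) - Σ_{A ∈ 𝓐} inf_{f ∈ F} f A : 𝓐 a finite collection of finite subsets }`. -/
noncomputable def deltaT {X : Type*} (δ : Finset X → ℝ) (F : Finset (Finset X → ℝ)) : ℝ :=
  if F = ∅ then 0
  else sSup {r : ℝ | ∃ 𝓐 : Finset (Finset X),
    r = δ (𝓐.sup id) - ∑ A ∈ 𝓐, sInf ((fun f => f A) '' (F : Set (Finset X → ℝ)))}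

/-- The diameter diversity of a metric space. -/
noncomputable def diamDiv (X : Type*) [MetricSpace X] : Finset X → ℝ :=
  fun A => Metric.diam (A : Set X)

/-- Membership in `P_X` for the metric tight span: `f x + f y ≥ d(x,y)` for all `x, y`. -/
def MetricMemP {X : Type*} [MetricSpace X] (f : X → ℝ) : Prop :=
  ∀ x y : X, dist x y ≤ f x + f y

/-- Membership in the metric tight span `T^d_X`: pointwise-minimal such functions. -/
def MetricMemT {X : Type*} [MetricSpace X] (f : X → ℝ) : Prop :=
  MetricMemP f ∧ ∀ g : X → ℝ, MetricMemP g → (∀ x, g x ≤ f x) → g = f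

/-- The metric on the metric tight span: `d_T(f,g) = sup_x |f x - g x|`. -/
noncomputable def dT {X : Type*} (f g : X → ℝ) : ℝ :=
  sSup (Set.range fun x : X => |f x - g x|)

/-!
Both tight spans consist of the minimal functions dominating a pairwise cost: `d (x, y)` for the
metric, and `diam (A ∪ B)` for the diameter diversity, whose defining inequality over arbitrary
collections reduces to pairs because two points of `⋃ 𝓐` always lie in the union of at most two
members. Hence a value of a minimal function can be lowered to any `c` that still pays for every
pair through it, so it is already `≤ c`; this single move proves that `Φ f A = max (diam A)
(max_{a ∈ A} f a)` is minimal for `f` in the metric tight span, and that every `h` in the diversity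
tight span is `Φ` of its restriction `x ↦ h {x}` to singletons. For the distance, `δ_T {Φ f, Φ g}`
is at most `d_T (f, g)` since every pair of points of `⋃ 𝓐` is paid for by at most two summands
and one switch between `f` and `g`, and at least `f x - g x` through the collections `{{x}, {y}}`
with `y` almost tight for `f` at `x`.
-/

section Minimal

variable {ι : Type*}

def PairwiseDominates (L : ι → ℝ) (R : ι → ι → ℝ) (g : ι → ℝ) : Prop :=
  (∀ i, L i ≤ g i) ∧ ∀ i j, i ≠ j → R i j ≤ g i + g j

theorem PairwiseDominates.update_min [DecidableEq ι] {L : ι → ℝ} {R : ι → ι → ℝ}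
    (hR : ∀ i j, R i j = R j i) {g : ι → ℝ} (hg : PairwiseDominates L R g) {i : ι} {c : ℝ}
    (hLc : L i ≤ c) (hRc : ∀ j, j ≠ i → R i j ≤ c + g j) :
    PairwiseDominates L R (Function.update g i (min c (g i))) := by
  have hi : ∀ k, k ≠ i → R i k ≤ min c (g i) + g k := fun k hk => by
    rw [← min_add_add_right]
    exact le_min (hRc k hk) (hg.2 i k hk.symm)
  refine ⟨fun j => ?_, fun j k hjk => ?_⟩
  · rcases eq_or_ne j i with rfl | hj
    · simpa using ⟨hLc, hg.1 j⟩
    · simpa [hj] using hg.1 j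
  · rcases eq_or_ne j i with hj | hj <;> rcases eq_or_ne k i with hk | hk
    · exact absurd (hj.trans hk.symm) hjk
    · rw [hj]
      simpa [hk] using hi k hk
    · rw [hk, hR]
      simpa [hj, add_comm] using hi j hj
    · simpa [hj, hk] using hg.2 j k hjk

theorem le_of_minimal_of_update [DecidableEq ι] {P : (ι → ℝ) → Prop} {f : ι → ℝ}
    (hf : ∀ g, P g → (∀ i, g i ≤ f i) → g = f) {i : ι} {c : ℝ}
    (hP : P (Function.update f i (min c (f i)))) : f i ≤ c := by
  have hle : ∀ j, Function.update f i (min c (f i)) j ≤ f j := by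
    intro j
    rcases eq_or_ne j i with rfl | hj
    · simp
    · simp [hj]
  simpa using congrFun (hf _ hP hle) i

end Minimal

theorem dT_nonneg {X : Type*} (f g : X → ℝ) : 0 ≤ dT f g :=
  Real.sSup_nonneg (by rintro _ ⟨x, rfl⟩; exact abs_nonneg _)

theorem dT_comm {X : Type*} (f g : X → ℝ) : dT f g = dT g f := by
  simp only [dT, abs_sub_comm]

theorem deltaT_pair {X : Type*} (δ : Finset X → ℝ) (u v : Finset X → ℝ) :
    deltaT δ {u, v} =
      sSup {r : ℝ | ∃ 𝓐 : Finset (Finset X), r = δ (𝓐.sup id) - ∑ A ∈ 𝓐, min (u A) (v A)} := by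
  simp only [deltaT, Finset.insert_ne_empty, if_false, Finset.coe_insert, Finset.coe_singleton,
    Set.image_pair, csInf_pair]

section Metric

variable {X : Type*} [MetricSpace X]

theorem Metric.diam_union_le_of_forall_dist_le {s t : Set X} (hs : Bornology.IsBounded s)
    (ht : Bornology.IsBounded t) {c : ℝ} (hc : 0 ≤ c) (hsc : Metric.diam s ≤ c)
    (htc : Metric.diam t ≤ c) (hst : ∀ x ∈ s, ∀ y ∈ t, dist x y ≤ c) :
    Metric.diam (s ∪ t) ≤ c := by
  refine Metric.diam_le_of_forall_dist_le hc fun x hx y hy => ?_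
  rcases hx with hx | hx <;> rcases hy with hy | hy
  · exact (Metric.dist_le_diam_of_mem hs hx hy).trans hsc
  · exact hst x hx y hy
  · exact dist_comm x y ▸ hst y hy x hx
  · exact (Metric.dist_le_diam_of_mem ht hx hy).trans htc

theorem diam_finset_sup_le_sum_add {𝓐 : Finset (Finset X)} {w : Finset X → ℝ} {D : ℝ}
    (hw : ∀ A ∈ 𝓐, 0 ≤ w A) (hD : 0 ≤ D)
    (hsame : ∀ A ∈ 𝓐, ∀ x ∈ A, ∀ y ∈ A, dist x y ≤ w A + D)
    (hpair : ∀ A ∈ 𝓐, ∀ B ∈ 𝓐, A ≠ B → ∀ x ∈ A, ∀ y ∈ B, dist x y ≤ w A + w B + D) :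
    Metric.diam ((𝓐.sup id : Finset X) : Set X) ≤ ∑ A ∈ 𝓐, w A + D := by
  refine Metric.diam_le_of_forall_dist_le (add_nonneg (Finset.sum_nonneg hw) hD) ?_
  intro x hx y hy
  obtain ⟨A, hA, hxA⟩ := Finset.mem_sup.1 hx
  obtain ⟨B, hB, hyB⟩ := Finset.mem_sup.1 hy
  rcases eq_or_ne A B with rfl | hAB
  · linarith [hsame A hA x hxA y hyB, Finset.single_le_sum hw hA]
  · have hsum : w A + w B ≤ ∑ C ∈ 𝓐, w C := by
      rw [← Finset.sum_pair hAB]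
      exact Finset.sum_le_sum_of_subset_of_nonneg (by simp [Finset.insert_subset_iff, hA, hB])
        fun C hC _ => hw C hC
    linarith [hpair A hA B hB hAB x hxA y hyB]

theorem metricMemP_iff {f : X → ℝ} : MetricMemP f ↔ PairwiseDominates 0 dist f := by
  refine ⟨fun hf => ⟨fun x => ?_, fun x y _ => hf x y⟩, fun hf x y => ?_⟩
  · show 0 ≤ f x
    linarith [dist_self x ▸ hf x x]
  · rcases eq_or_ne x y with rfl | hxy
    · have hx : 0 ≤ f x := hf.1 x
      linarith [dist_self x]
    · exact hf.2 x y hxy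

theorem MetricMemP.nonneg {f : X → ℝ} (hf : MetricMemP f) (x : X) : 0 ≤ f x :=
  (metricMemP_iff.1 hf).1 x

theorem MetricMemT.le_of_forall_dist_le {f : X → ℝ} (hf : MetricMemT f) {x : X} {c : ℝ}
    (hc : 0 ≤ c) (h : ∀ y, y ≠ x → dist x y ≤ c + f y) : f x ≤ c :=
  le_of_minimal_of_update hf.2 <| metricMemP_iff.2 <|
    (metricMemP_iff.1 hf.1).update_min dist_comm hc h

theorem MetricMemT.le_add_dist {f : X → ℝ} (hf : MetricMemT f) (x z : X) :
    f x ≤ f z + dist x z :=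
  hf.le_of_forall_dist_le (add_nonneg (hf.1.nonneg z) dist_nonneg) fun y _ => by
    linarith [dist_triangle x z y, hf.1 z y]

theorem MetricMemT.exists_add_lt_dist_add {f : X → ℝ} (hf : MetricMemT f) (x : X) {ε : ℝ}
    (hε : 0 < ε) : ∃ y, f x + f y < dist x y + ε := by
  by_contra! h
  have hx := hf.le_of_forall_dist_le (c := max 0 (f x - ε)) (le_max_left _ _) fun y _ => by
    linarith [h y, le_max_right 0 (f x - ε)]
  rcases le_max_iff.1 hx with hx | hx <;> linarith [h x, dist_self x]

theorem MetricMemT.abs_sub_le_dT {f g : X → ℝ} (hf : MetricMemT f) (hg : MetricMemT g) (x : X) :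
    |f x - g x| ≤ dT f g := by
  refine le_csSup ⟨f x + g x, ?_⟩ ⟨x, rfl⟩
  rintro _ ⟨y, rfl⟩
  rw [abs_sub_le_iff]
  constructor <;> linarith [hf.le_add_dist y x, hg.le_add_dist y x, hf.1 y x, hg.1 y x]

theorem MetricMemT.dist_le_add_add_dT {f g : X → ℝ} (hf : MetricMemT f) (hg : MetricMemT g)
    (x y : X) : dist x y ≤ f x + g y + dT f g := by
  linarith [hf.1 x y, (abs_sub_le_iff.1 (hf.abs_sub_le_dT hg y)).1]

theorem memP_diamDiv_iff {h : Finset X → ℝ} :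
    MemP (diamDiv X) h ↔ h ∅ = 0 ∧ PairwiseDominates (fun A : Finset X => Metric.diam (A : Set X))
      (fun A B => Metric.diam ((A ∪ B : Finset X) : Set X)) h := by
  constructor
  · rintro ⟨h0, hh⟩
    refine ⟨h0, fun A => by simpa [diamDiv] using hh {A}, fun A B hAB => ?_⟩
    simpa [diamDiv, Finset.sum_pair hAB] using hh {A, B}
  · rintro ⟨h0, hL, hR⟩
    refine ⟨h0, fun 𝓐 => ?_⟩
    simpa [diamDiv] using diam_finset_sup_le_sum_add (D := 0)
      (fun A _ => Metric.diam_nonneg.trans (hL A)) le_rfl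
      (fun A _ x hx y hy => by
        simpa using (Metric.dist_le_diam_of_mem A.finite_toSet.isBounded hx hy).trans (hL A))
      (fun A _ B _ hAB x hx y hy => by
        simpa using (Metric.dist_le_diam_of_mem (A ∪ B).finite_toSet.isBounded
          (by simp [hx]) (by simp [hy])).trans (hR A B hAB))

theorem MemP.diam_le {h : Finset X → ℝ} (hh : MemP (diamDiv X) h) (A : Finset X) :
    Metric.diam (A : Set X) ≤ h A :=
  (memP_diamDiv_iff.1 hh).2.1 A

theorem MemP.nonneg {h : Finset X → ℝ} (hh : MemP (diamDiv X) h) (A : Finset X) : 0 ≤ h A :=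
  Metric.diam_nonneg.trans (hh.diam_le A)

theorem MemP.diam_union_le {h : Finset X → ℝ} (hh : MemP (diamDiv X) h) (A B : Finset X) :
    Metric.diam ((A ∪ B : Finset X) : Set X) ≤ h A + h B := by
  rcases eq_or_ne A B with rfl | hAB
  · simpa using (hh.diam_le A).trans (le_add_of_nonneg_right (hh.nonneg A))
  · exact (memP_diamDiv_iff.1 hh).2.2 A B hAB

theorem MemT.le_of_forall_diam_union_le {h : Finset X → ℝ} (hh : MemT (diamDiv X) h)
    {A : Finset X} {c : ℝ} (hc : Metric.diam (A : Set X) ≤ c)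
    (hAc : ∀ B, B ≠ A → Metric.diam ((A ∪ B : Finset X) : Set X) ≤ c + h B) : h A ≤ c := by
  rcases A.eq_empty_or_nonempty with rfl | hA
  · simpa [hh.1.1] using hc
  obtain ⟨h0, hdom⟩ := memP_diamDiv_iff.1 hh.1
  refine le_of_minimal_of_update hh.2 (memP_diamDiv_iff.2 ⟨?_, ?_⟩)
  · simpa [hA.ne_empty.symm] using h0
  · exact hdom.update_min (fun _ _ => by rw [Finset.union_comm]) hc hAc

theorem MemT.singleton_le {h : Finset X → ℝ} (hh : MemT (diamDiv X) h) {y : X} {B : Finset X}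
    (hy : y ∈ B) : h {y} ≤ h B := by
  refine hh.le_of_forall_diam_union_le (by simpa using hh.1.nonneg B) fun C _ => ?_
  refine (Metric.diam_mono ?_ (B ∪ C).finite_toSet.isBounded).trans (hh.1.diam_union_le B C)
  exact_mod_cast Finset.union_subset_union (Finset.singleton_subset_iff.2 hy) subset_rfl

/-- `max (diam A) (max_{a ∈ A} f a)`, with the value `diam ∅ = 0` at `∅`. -/
def diamExtension (f : X → ℝ) (A : Finset X) : ℝ :=
  A.fold max (Metric.diam (A : Set X)) f

theorem diamExtension_le_iff {f : X → ℝ} {A : Finset X} {c : ℝ} :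
    diamExtension f A ≤ c ↔ Metric.diam (A : Set X) ≤ c ∧ ∀ a ∈ A, f a ≤ c :=
  Finset.fold_max_le c

theorem diam_le_diamExtension (f : X → ℝ) (A : Finset X) :
    Metric.diam (A : Set X) ≤ diamExtension f A :=
  (diamExtension_le_iff.1 le_rfl).1

theorem le_diamExtension (f : X → ℝ) {A : Finset X} {a : X} (ha : a ∈ A) :
    f a ≤ diamExtension f A :=
  (diamExtension_le_iff.1 le_rfl).2 a ha

theorem diamExtension_nonneg (f : X → ℝ) (A : Finset X) : 0 ≤ diamExtension f A :=
  Metric.diam_nonneg.trans (diam_le_diamExtension f A)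

theorem diamExtension_empty (f : X → ℝ) : diamExtension f ∅ = 0 := by
  simp [diamExtension]

theorem diamExtension_singleton {f : X → ℝ} {x : X} (hx : 0 ≤ f x) :
    diamExtension f {x} = f x := by
  simp [diamExtension, hx]

theorem memP_diamExtension {f : X → ℝ} (hf : MetricMemP f) :
    MemP (diamDiv X) (diamExtension f) := by
  refine memP_diamDiv_iff.2 ⟨diamExtension_empty f, diam_le_diamExtension f, fun A B _ => ?_⟩
  have hA := diamExtension_nonneg f A
  have hB := diamExtension_nonneg f B
  show Metric.diam ((A ∪ B : Finset X) : Set X) ≤ _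
  rw [Finset.coe_union]
  refine Metric.diam_union_le_of_forall_dist_le A.finite_toSet.isBounded
    B.finite_toSet.isBounded (add_nonneg hA hB) ?_ ?_ fun x hx y hy => ?_
  · linarith [diam_le_diamExtension f A]
  · linarith [diam_le_diamExtension f B]
  · linarith [hf x y, le_diamExtension f hx, le_diamExtension f hy]

theorem memT_diamExtension {f : X → ℝ} (hf : MetricMemT f) :
    MemT (diamDiv X) (diamExtension f) := by
  refine ⟨memP_diamExtension hf.1, fun g hg hle => funext fun A => le_antisymm (hle A) ?_⟩
  refine diamExtension_le_iff.2 ⟨hg.diam_le A, fun a ha => ?_⟩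
  refine hf.le_of_forall_dist_le (hg.nonneg A) fun y _ => ?_
  calc dist a y ≤ Metric.diam ((A ∪ {y} : Finset X) : Set X) :=
        Metric.dist_le_diam_of_mem (A ∪ {y}).finite_toSet.isBounded (by simp [ha]) (by simp)
    _ ≤ g A + g {y} := hg.diam_union_le A {y}
    _ ≤ g A + f y := by
        have hy := hle {y}
        rw [diamExtension_singleton (hf.1.nonneg y)] at hy
        linarith

theorem MemT.metricMemT_restrict {h : Finset X → ℝ} (hh : MemT (diamDiv X) h) :
    MetricMemT fun x => h {x} := by
  have hP : MetricMemP fun x => h {x} := fun x y =>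
    (Metric.dist_le_diam_of_mem ({x} ∪ {y} : Finset X).finite_toSet.isBounded (by simp)
      (by simp)).trans (hh.1.diam_union_le {x} {y})
  refine ⟨hP, fun g hg hle => funext fun x => le_antisymm (hle x) ?_⟩
  refine hh.le_of_forall_diam_union_le (by simpa using hg.nonneg x) fun B _ => ?_
  have hx := hg.nonneg x
  have hB := hh.1.nonneg B
  rw [Finset.coe_union, Finset.coe_singleton]
  refine Metric.diam_union_le_of_forall_dist_le (Set.finite_singleton x).isBounded
    B.finite_toSet.isBounded (add_nonneg hx hB) (by simpa using add_nonneg hx hB) ?_ ?_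
  · linarith [hh.1.diam_le B]
  · rintro z rfl y hy
    linarith [hg z y, hle y, hh.singleton_le hy]

theorem MemT.diamExtension_restrict {h : Finset X → ℝ} (hh : MemT (diamDiv X) h) :
    diamExtension (fun x => h {x}) = h :=
  hh.2 _ (memP_diamExtension hh.metricMemT_restrict.1) fun A =>
    diamExtension_le_iff.2 ⟨hh.1.diam_le A, fun _ ha => hh.singleton_le ha⟩

theorem diam_sup_sub_sum_min_le_dT {f g : X → ℝ} (hf : MetricMemT f) (hg : MetricMemT g)
    (𝓐 : Finset (Finset X)) :
    Metric.diam ((𝓐.sup id : Finset X) : Set X) -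
      ∑ A ∈ 𝓐, min (diamExtension f A) (diamExtension g A) ≤ dT f g := by
  have hD := dT_nonneg f g
  have hcross : ∀ A B : Finset X, ∀ x ∈ A, ∀ y ∈ B,
      dist x y ≤ min (diamExtension f A) (diamExtension g A) +
        min (diamExtension f B) (diamExtension g B) + dT f g := by
    intro A B x hx y hy
    have := le_diamExtension f hx
    have := le_diamExtension g hx
    have := le_diamExtension f hy
    have := le_diamExtension g hy
    rcases min_choice (diamExtension f A) (diamExtension g A) with hA | hA <;>
      rcases min_choice (diamExtension f B) (diamExtension g B) with hB | hB <;> rw [hA, hB]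
    -- one switch between `f` and `g` costs at most `dT f g`
    all_goals linarith [hf.1 x y, hg.1 x y, hf.dist_le_add_add_dT hg x y,
      hg.dist_le_add_add_dT hf x y, dT_comm f g]
  have := diam_finset_sup_le_sum_add (𝓐 := 𝓐) (fun A _ => le_min (diamExtension_nonneg f A)
      (diamExtension_nonneg g A)) hD
    (fun A _ x hx y hy =>
      (Metric.dist_le_diam_of_mem A.finite_toSet.isBounded hx hy).trans <|
        (le_min (diam_le_diamExtension f A) (diam_le_diamExtension g A)).trans
          (le_add_of_nonneg_right hD))
    fun A _ B _ _ => hcross A B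
  linarith

theorem deltaT_diamExtension_le_dT {f g : X → ℝ} (hf : MetricMemT f) (hg : MetricMemT g) :
    deltaT (diamDiv X) {diamExtension f, diamExtension g} ≤ dT f g := by
  rw [deltaT_pair]
  exact csSup_le ⟨_, ∅, rfl⟩ fun _ ⟨𝓐, h𝓐⟩ => h𝓐 ▸ diam_sup_sub_sum_min_le_dT hf hg 𝓐

theorem le_deltaT_diamExtension {f g : X → ℝ} (hf : MetricMemT f) (hg : MetricMemT g)
    (𝓐 : Finset (Finset X)) :
    Metric.diam ((𝓐.sup id : Finset X) : Set X) -
      ∑ A ∈ 𝓐, min (diamExtension f A) (diamExtension g A) ≤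
        deltaT (diamDiv X) {diamExtension f, diamExtension g} := by
  rw [deltaT_pair]
  exact le_csSup ⟨dT f g, fun _ ⟨𝓑, h𝓑⟩ => h𝓑 ▸ diam_sup_sub_sum_min_le_dT hf hg 𝓑⟩ ⟨𝓐, rfl⟩

theorem deltaT_diamExtension_nonneg {f g : X → ℝ} (hf : MetricMemT f) (hg : MetricMemT g) :
    0 ≤ deltaT (diamDiv X) {diamExtension f, diamExtension g} := by
  simpa using le_deltaT_diamExtension hf hg ∅

theorem sub_le_deltaT_diamExtension {f g : X → ℝ} (hf : MetricMemT f) (hg : MetricMemT g)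
    (x : X) : f x - g x ≤ deltaT (diamDiv X) {diamExtension f, diamExtension g} := by
  refine le_of_forall_pos_lt_add fun ε hε => ?_
  obtain ⟨y, hy⟩ := hf.exists_add_lt_dist_add x hε
  have hfx := hf.1.nonneg x
  have hgx := hg.1.nonneg x
  rcases eq_or_ne x y with rfl | hxy
  · linarith [dist_self x, deltaT_diamExtension_nonneg hf hg]
  have hpair := le_deltaT_diamExtension hf hg {{x}, {y}}
  rw [Finset.sum_pair (by simpa using hxy), Finset.sup_insert, Finset.sup_singleton] at hpair
  simp only [id, diamExtension_singleton hfx, diamExtension_singleton hgx,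
    diamExtension_singleton (hf.1.nonneg y)] at hpair
  have hdiam : Metric.diam ((({x} ⊔ {y} : Finset X)) : Set X) = dist x y := by
    simpa using Metric.diam_pair (x := x) (y := y)
  linarith [min_le_right (f x) (g x), min_le_left (f y) (diamExtension g {y})]

theorem deltaT_diamExtension {f g : X → ℝ} (hf : MetricMemT f) (hg : MetricMemT g) :
    deltaT (diamDiv X) {diamExtension f, diamExtension g} = dT f g := by
  refine le_antisymm (deltaT_diamExtension_le_dT hf hg) (Real.sSup_le ?_ ?_)
  · rintro _ ⟨x, rfl⟩
    refine abs_sub_le_iff.2 ⟨sub_le_deltaT_diamExtension hf hg x, ?_⟩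
    rw [Finset.pair_comm]
    exact sub_le_deltaT_diamExtension hg hf x
  · exact deltaT_diamExtension_nonneg hf hg

end Metric

/-- for a metric space `(X, d)` with diameter diversity `δ = diam_d`, the
induced metric of the diversity tight span `(T^δ_X, δ_T)` is isometric to the metric tight
span `(T^d_X, d_T)`: there is a bijection `Φ` from `T^d_X` onto `T^δ_X` with
`δ_T {Φ f, Φ g} = d_T(f, g)`. -/
theorem metric_tightSpan_isometric_induced {X : Type*} [MetricSpace X] :
    ∃ Φ : (X → ℝ) → (Finset X → ℝ),
      (∀ f : X → ℝ, MetricMemT f → MemT (diamDiv X) (Φ f)) ∧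
      (∀ f g : X → ℝ, MetricMemT f → MetricMemT g → Φ f = Φ g → f = g) ∧
      (∀ h : Finset X → ℝ, MemT (diamDiv X) h → ∃ f : X → ℝ, MetricMemT f ∧ Φ f = h) ∧
      (∀ f g : X → ℝ, MetricMemT f → MetricMemT g →
        deltaT (diamDiv X) {Φ f, Φ g} = dT f g) := by
  refine ⟨diamExtension, fun f hf => memT_diamExtension hf, fun f g hf hg hfg => ?_,
    fun h hh => ⟨_, hh.metricMemT_restrict, hh.diamExtension_restrict⟩,
    fun f g hf hg => deltaT_diamExtension hf hg⟩
  funext x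
  simpa [diamExtension_singleton (hf.1.nonneg x), diamExtension_singleton (hg.1.nonneg x)]
    using congrFun hfg {x}

end
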